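/- arXiv:math/0303175 — 7 statements merged into one kernel-verified Lean document; each statement's English description precedes it below -/
import Mathlib

section
/- Let S : A ⥤ B be a functor that is bijective on objects and J : C ⥤ D a fully faithful functor. For any functors U : A ⥤ C and V : B ⥤ D with U ⋙ J = S ⋙ V, there exists a unique functor W : B ⥤ C such that S ⋙ W = U and W ⋙ J = V (the diagonal fill-in property). -/
open CategoryTheory

universe v₁ v₂ v₃ v₄ u₁ u₂ u₃ u₄

/-- The diagonal fill-in property: given a commutative square of functors `U ⋙ J = S ⋙ V`
with `S` bijective on objects and `J` fully faithful, there is a unique diagonal functor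
`W` with `S ⋙ W = U` and `W ⋙ J = V`. -/
theorem diagonal_fill_in {A : Type u₁} {B : Type u₂} {C : Type u₃} {D : Type u₄}
    [Category.{v₁} A] [Category.{v₂} B] [Category.{v₃} C] [Category.{v₄} D]
    (S : A ⥤ B) (J : C ⥤ D) (hS : Function.Bijective S.obj)
    (hJfull : J.Full) (hJfaithful : J.Faithful)
    (U : A ⥤ C) (V : B ⥤ D) (h : U ⋙ J = S ⋙ V) :
    ∃! W : B ⥤ C, S ⋙ W = U ∧ W ⋙ J = V := by
  let e := Equiv.ofBijective S.obj hS
  have hobj : ∀ a : A, J.obj (U.obj a) = V.obj (S.obj a) := fun a =>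
    Functor.congr_obj h a
  have hobj' : ∀ b : B, J.obj (U.obj (e.symm b)) = V.obj b := fun b => by
    rw [hobj]; exact congrArg V.obj (e.apply_symm_apply b)
  let W : B ⥤ C :=
    { obj := fun b => U.obj (e.symm b)
      map := fun {b b'} f =>
        J.preimage (eqToHom (hobj' b) ≫ V.map f ≫ eqToHom (hobj' b').symm)
      map_id := fun b => by
        apply hJfaithful.map_injective
        simp
      map_comp := fun {b b' b''} f g => by
        apply hJfaithful.map_injective
        simp }
  have hmor : ∀ {b b' : B} (f : b ⟶ b'),
      J.map (W.map f) = eqToHom (hobj' b) ≫ V.map f ≫ eqToHom (hobj' b').symm :=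
    fun f => J.map_preimage _
  refine ⟨W, ⟨?_, ?_⟩, ?_⟩
  · apply CategoryTheory.Functor.ext
    · intro a a' f
      apply hJfaithful.map_injective
      have := Functor.congr_hom h f
      simp only [Functor.comp_map] at this
      simp [W, hmor, this, e, eqToHom_map]
    · intro a
      show U.obj (e.symm (e a)) = U.obj a
      rw [e.symm_apply_apply]
  · apply CategoryTheory.Functor.ext
    · intro b b' f
      simp [W, hmor]
    · exact hobj'
  · rintro W' ⟨hW1, hW2⟩
    apply CategoryTheory.Functor.ext
    · intro b b' f
      apply hJfaithful.map_injective
      have h2 := Functor.congr_hom hW2 f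
      simp only [Functor.comp_map] at h2
      simp [hmor, h2, eqToHom_map]
    · intro b
      have : W'.obj (S.obj (e.symm b)) = U.obj (e.symm b) := Functor.congr_obj hW1 (e.symm b)
      rw [← this]
      exact congrArg W'.obj (e.apply_symm_apply b).symm
end

section
/- Let S : A ⥤ B be bijective on objects and J : C ⥤ D fully faithful. Let P be the category whose objects are pairs (U : A ⥤ C, V : B ⥤ D) with U ⋙ J = S ⋙ V, and whose morphisms (U, V) ⟶ (U', V') are pairs of natural transformations (α : U ⟶ U', β : V ⟶ V') such that the right whiskering of α with J equals the left whiskering of S with β (as natural transformations U ⋙ J ⟶ U' ⋙ J, using the equalities U ⋙ J = S ⋙ V and U' ⋙ J = S ⋙ V'). Then the functor from the functor category (B ⥤ C) to P, sending W to (S ⋙ W, W ⋙ J) and a natural transformation γ to (the left whiskering of S with γ, the right whiskering of γ with J), is an isomorphism of categories. Equivalently, the square of functor categories formed by pre-composition with S and post-composition with J is a pullback. -/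
open CategoryTheory

universe v₁ v₂ v₃ v₄ u₁ u₂ u₃ u₄

variable {A : Type u₁} {B : Type u₂} {C : Type u₃} {D : Type u₄}
variable [Category.{v₁} A] [Category.{v₂} B] [Category.{v₃} C] [Category.{v₄} D]

/-- An object of the (strict) pullback of the functor categories along
pre-composition with `S` and post-composition with `J`: a pair of functors
`(U, V)` with `U ⋙ J = S ⋙ V`. -/
structure SquareObj (S : A ⥤ B) (J : C ⥤ D) where
  U : A ⥤ C
  V : B ⥤ D
  w : U ⋙ J = S ⋙ V

/-- A morphism `(U, V) ⟶ (U', V')` of `SquareObj S J`: a pair of natural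
transformations `(α, β)` such that the right whiskering of `α` with `J` equals the
left whiskering of `S` with `β` (modulo the identifications `U ⋙ J = S ⋙ V` and
`U' ⋙ J = S ⋙ V'`). -/
@[ext]
structure SquareHom {S : A ⥤ B} {J : C ⥤ D} (X Y : SquareObj S J) where
  α : X.U ⟶ Y.U
  β : X.V ⟶ Y.V
  w : Functor.whiskerRight α J = eqToHom X.w ≫ Functor.whiskerLeft S β ≫ eqToHom Y.w.symm

instance (S : A ⥤ B) (J : C ⥤ D) : Category (SquareObj S J) where
  Hom := SquareHom
  id X := ⟨𝟙 X.U, 𝟙 X.V, by ext a; simp [eqToHom_app]⟩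
  comp f g := ⟨f.α ≫ g.α, f.β ≫ g.β, by
    ext a
    have hf := congr_app f.w a
    have hg := congr_app g.w a
    simp only [Functor.whiskerRight_app, NatTrans.comp_app, Functor.whiskerLeft_app, eqToHom_app] at hf hg ⊢
    simp [J.map_comp, hf, hg]⟩
  id_comp f := by apply SquareHom.ext <;> simp
  comp_id f := by apply SquareHom.ext <;> simp
  assoc f g h := by apply SquareHom.ext <;> simp

/-- The comparison functor from the functor category `B ⥤ C` to the category of
squares, sending `W` to `(S ⋙ W, W ⋙ J)` and `γ` to the pair of whiskerings. -/
def toSquare (S : A ⥤ B) (J : C ⥤ D) : (B ⥤ C) ⥤ SquareObj S J where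
  obj W := ⟨S ⋙ W, W ⋙ J, Functor.assoc S W J⟩
  map γ := ⟨Functor.whiskerLeft S γ, Functor.whiskerRight γ J, by ext a; simp [eqToHom_app]⟩
  map_id W := by
    apply SquareHom.ext
    · rfl
    · show Functor.whiskerRight (𝟙 W) J = 𝟙 (W ⋙ J)
      ext a; simp
  map_comp f g := by
    apply SquareHom.ext
    · rfl
    · show Functor.whiskerRight (f ≫ g) J = Functor.whiskerRight f J ≫ Functor.whiskerRight g J
      ext a; simp


section Aux

variable {S : A ⥤ B} {J : C ⥤ D}

lemma SquareObj.hobj (X : SquareObj S J) (a : A) :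
    J.obj (X.U.obj a) = X.V.obj (S.obj a) :=
  Functor.congr_obj X.w a

lemma SquareObj.hmap (X : SquareObj S J) {a a' : A} (f : a ⟶ a') :
    J.map (X.U.map f) = eqToHom (X.hobj a) ≫ X.V.map (S.map f) ≫ eqToHom (X.hobj a').symm :=
  Functor.congr_hom X.w f

lemma SquareObj.ext' {X Y : SquareObj S J} (hU : X.U = Y.U) (hV : X.V = Y.V) : X = Y := by
  cases X; cases Y; cases hU; cases hV; rfl


lemma natTrans_conj {E₁ : Type*} {E₂ : Type*} [Category E₁] [Category E₂]
    {F G : E₁ ⥤ E₂} (β : F ⟶ G) {b b' : E₁} (h : b = b') :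
    β.app b = eqToHom (by rw [h]) ≫ β.app b' ≫ eqToHom (by rw [h]) := by
  subst h; simp

lemma functor_conj (F : B ⥤ C) {b₁ b₂ b₁' b₂' : B} (h₁ : b₁ = b₁') (h₂ : b₂ = b₂')
    (f : b₁ ⟶ b₂) :
    F.map (eqToHom h₁.symm ≫ f ≫ eqToHom h₂) =
      eqToHom (by rw [h₁]) ≫ F.map f ≫ eqToHom (by rw [h₂]) := by
  subst h₁; subst h₂; simp

variable (hS : Function.Bijective S.obj) [J.Full] [J.Faithful]

noncomputable def invObj (X : SquareObj S J) : B ⥤ C where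
  obj b := X.U.obj ((Equiv.ofBijective S.obj hS).symm b)
  map {b b'} f := J.preimage
    (eqToHom ((X.hobj _).trans (congrArg X.V.obj ((Equiv.ofBijective S.obj hS).apply_symm_apply b)))
      ≫ X.V.map f ≫
      eqToHom (((X.hobj _).trans (congrArg X.V.obj ((Equiv.ofBijective S.obj hS).apply_symm_apply b'))).symm))
  map_id b := by
    apply J.map_injective
    simp
  map_comp {b b' b''} f g := by
    apply J.map_injective
    simp

lemma invObj_map (X : SquareObj S J) {b b' : B} (f : b ⟶ b') :
    J.map ((invObj hS X).map f) =
      eqToHom ((X.hobj _).trans (congrArg X.V.obj ((Equiv.ofBijective S.obj hS).apply_symm_apply b)))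
        ≫ X.V.map f ≫
        eqToHom (((X.hobj _).trans (congrArg X.V.obj ((Equiv.ofBijective S.obj hS).apply_symm_apply b'))).symm) :=
  J.map_preimage _

lemma squareHom_w_app {X Y : SquareObj S J} (f : SquareHom X Y) (a : A) :
    J.map (f.α.app a) = eqToHom (X.hobj a) ≫ f.β.app (S.obj a) ≫ eqToHom (Y.hobj a).symm := by
  have := congr_app f.w a
  simpa [eqToHom_app] using this

lemma eqToHom_nat_aux {E : Type*} [Category E] {F G : B ⥤ E} (β : F ⟶ G) {b b' : B}
    (g : b ⟶ b') {x y m1 m2 m3 m4 : E}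
    {p1 : x = F.obj b} {p2 : F.obj b' = m1} {p3 : m1 = F.obj b'} {p4 : G.obj b' = m2}
    {p5 : m2 = y} {p6 : x = F.obj b} {p7 : G.obj b = m3} {p8 : m3 = m4} {p9 : m4 = G.obj b}
    {p10 : G.obj b' = y} :
    (eqToHom p1 ≫ F.map g ≫ eqToHom p2) ≫ eqToHom p3 ≫ β.app b' ≫ eqToHom p4 ≫ eqToHom p5 =
      (eqToHom p6 ≫ β.app b ≫ eqToHom p7 ≫ eqToHom p8) ≫ eqToHom p9 ≫ G.map g ≫
        eqToHom p10 := by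
  subst p2 p5 p4 p7 p8 p1
  simp

noncomputable def invFunctor : SquareObj S J ⥤ (B ⥤ C) where
  obj X := invObj hS X
  map {X Y} f :=
    { app := fun b => f.α.app ((Equiv.ofBijective S.obj hS).symm b)
      naturality := fun b b' g => by
        apply J.map_injective
        have hb : S.obj ((Equiv.ofBijective S.obj hS).symm b) = b :=
          (Equiv.ofBijective S.obj hS).apply_symm_apply b
        have hb' : S.obj ((Equiv.ofBijective S.obj hS).symm b') = b' :=
          (Equiv.ofBijective S.obj hS).apply_symm_apply b'
        erw [Functor.map_comp, Functor.map_comp, invObj_map, invObj_map, squareHom_w_app, squareHom_w_app]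
        rw [natTrans_conj f.β hb, natTrans_conj f.β hb']
        simp only [Category.assoc]
        erw [eqToHom_trans_assoc, eqToHom_trans_assoc]
        exact eqToHom_nat_aux f.β g }
  map_id X := by ext b; simp; rfl
  map_comp f g := by ext b; simp; rfl


lemma eqToHom_α {X Y : SquareObj S J} (h : X = Y) :
    (eqToHom h : X ⟶ Y).α = eqToHom (congrArg SquareObj.U h) := by
  subst h; rfl

lemma eqToHom_β {X Y : SquareObj S J} (h : X = Y) :
    (eqToHom h : X ⟶ Y).β = eqToHom (congrArg SquareObj.V h) := by
  subst h; rfl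

@[simp] lemma comp_α {X Y Z : SquareObj S J} (f : X ⟶ Y) (g : Y ⟶ Z) :
    (f ≫ g).α = f.α ≫ g.α := rfl

@[simp] lemma comp_β {X Y Z : SquareObj S J} (f : X ⟶ Y) (g : Y ⟶ Z) :
    (f ≫ g).β = f.β ≫ g.β := rfl

end Aux

/-- If `S` is bijective on objects and `J` is fully faithful, then the comparison
functor `toSquare S J : (B ⥤ C) ⥤ SquareObj S J` is an isomorphism of categories;
equivalently, the square of functor categories formed by pre-composition with `S`
and post-composition with `J` is a pullback. -/
theorem toSquare_isIsomorphismOfCategories (S : A ⥤ B) (J : C ⥤ D)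
    (hS : Function.Bijective S.obj) (hJfull : J.Full) (hJfaithful : J.Faithful) :
    ∃ Ψ : SquareObj S J ⥤ (B ⥤ C),
      toSquare S J ⋙ Ψ = 𝟭 (B ⥤ C) ∧ Ψ ⋙ toSquare S J = 𝟭 (SquareObj S J) := by
  haveI := hJfull; haveI := hJfaithful
  refine ⟨invFunctor hS, ?_, ?_⟩
  · have hobj : ∀ W : B ⥤ C, (toSquare S J ⋙ invFunctor hS).obj W = W := by
      intro W
      apply CategoryTheory.Functor.ext
      · intro b b' f
        apply J.map_injective
        show J.map ((invObj hS ((toSquare S J).obj W)).map f) = _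
        rw [invObj_map hS ((toSquare S J).obj W) f]
        show eqToHom _ ≫ J.map (W.map f) ≫ eqToHom _ = _
        simp [eqToHom_map]
        rfl
      · intro b
        exact congrArg W.obj ((Equiv.ofBijective S.obj hS).apply_symm_apply b)
    apply CategoryTheory.Functor.ext hobj ?_
    intro W W' γ
    ext b
    simp only [NatTrans.comp_app, eqToHom_app]
    have hb : S.obj ((Equiv.ofBijective S.obj hS).symm b) = b :=
      (Equiv.ofBijective S.obj hS).apply_symm_apply b
    exact natTrans_conj γ hb
  · have hobj : ∀ X : SquareObj S J, (invFunctor hS ⋙ toSquare S J).obj X = X := by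
      intro X
      apply SquareObj.ext'
      · apply CategoryTheory.Functor.ext
        · intro a a' f
          apply J.map_injective
          show J.map ((invObj hS X).map (S.map f)) = _
          rw [invObj_map hS X (S.map f)]
          simp [eqToHom_map, X.hmap]
          rfl
        · intro a
          exact congrArg X.U.obj ((Equiv.ofBijective S.obj hS).symm_apply_apply a)
      · apply CategoryTheory.Functor.ext
        · intro b b' f
          show J.map ((invObj hS X).map f) = _
          rw [invObj_map hS X f]
          rfl
    apply CategoryTheory.Functor.ext hobj ?_
    intro X Y f
    apply SquareHom.ext
    · show Functor.whiskerLeft S ((invFunctor hS).map f) = _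
      simp only [comp_α, eqToHom_α]
      ext a
      simp only [Functor.whiskerLeft_app, NatTrans.comp_app, eqToHom_app]
      have ha : (Equiv.ofBijective S.obj hS).symm (S.obj a) = a :=
        (Equiv.ofBijective S.obj hS).symm_apply_apply a
      show f.α.app ((Equiv.ofBijective S.obj hS).symm (S.obj a)) = _
      exact natTrans_conj f.α ha
    · show Functor.whiskerRight ((invFunctor hS).map f) J = _
      simp only [comp_β, eqToHom_β]
      ext b
      simp only [Functor.whiskerRight_app, NatTrans.comp_app, eqToHom_app]
      show J.map (f.α.app ((Equiv.ofBijective S.obj hS).symm b)) = _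
      have hb : S.obj ((Equiv.ofBijective S.obj hS).symm b) = b :=
        (Equiv.ofBijective S.obj hS).apply_symm_apply b
      rw [squareHom_w_app, natTrans_conj f.β hb]
      simp
      rfl
end

section
/- A functor S : A ⥤ B is bijective on objects if and only if it has the diagonal fill-in property with respect to every fully faithful functor: that is, if and only if for every fully faithful functor J : C ⥤ D and all functors U : A ⥤ C and V : B ⥤ D with U ⋙ J = S ⋙ V, there exists a unique functor W : B ⥤ C with S ⋙ W = U and W ⋙ J = V. -/
/-!
If `S` is bijective on objects, a fill-in `W` has no choice on objects: `W (S a) = U a`. Since `J`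
is fully faithful, `V` lifts uniquely through `J` along this object map, and faithfulness of `J`
identifies any two candidates. Conversely, `S` factors as `A ⥤ FullImage S ⥤ B` (up to a change
of universe), the second functor being fully faithful; a fill-in of this square is a functor
`B ⥤ FullImage S` whose object map is a two-sided inverse of `S.obj`.
-/

open CategoryTheory

universe v₁ v₂ u₁ u₂
universe w

namespace CategoryTheory.Functor

section Lift

variable {B C D : Type*} [Category B] [Category C] [Category D]

theorem ext_of_comp_faithful (J : C ⥤ D) [J.Faithful] {F G : B ⥤ C}
    (h_obj : ∀ X, F.obj X = G.obj X) (h : F ⋙ J = G ⋙ J) : F = G :=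
  Functor.ext h_obj fun _ _ f => J.map_injective <| by
    simpa [eqToHom_map] using Functor.congr_hom h f

noncomputable def liftOfFullyFaithful (J : C ⥤ D) [J.Full] [J.Faithful] (V : B ⥤ D)
    (obj : B → C) (h : ∀ b, J.obj (obj b) = V.obj b) : B ⥤ C where
  obj := obj
  map f := J.preimage (eqToHom (h _) ≫ V.map f ≫ eqToHom (h _).symm)
  map_id _ := J.map_injective (by simp)
  map_comp _ _ := J.map_injective (by simp)

theorem liftOfFullyFaithful_comp (J : C ⥤ D) [J.Full] [J.Faithful] (V : B ⥤ D) (obj : B → C)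
    (h : ∀ b, J.obj (obj b) = V.obj b) : J.liftOfFullyFaithful V obj h ⋙ J = V :=
  Functor.ext h (by simp [liftOfFullyFaithful])

end Lift

theorem existsUnique_fill_in_of_bijective {A B C D : Type*} [Category A] [Category B]
    [Category C] [Category D] {S : A ⥤ B} (hS : Function.Bijective S.obj) (J : C ⥤ D)
    [J.Full] [J.Faithful] {U : A ⥤ C} {V : B ⥤ D} (h : U ⋙ J = S ⋙ V) :
    ∃! W : B ⥤ C, S ⋙ W = U ∧ W ⋙ J = V := by
  let e := Equiv.ofBijective _ hS
  have hSe (b : B) : S.obj (e.symm b) = b := e.apply_symm_apply b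
  have h_obj (b : B) : J.obj (U.obj (e.symm b)) = V.obj b := by
    simpa [hSe] using Functor.congr_obj h (e.symm b)
  refine ⟨J.liftOfFullyFaithful V _ h_obj, ⟨?_, liftOfFullyFaithful_comp ..⟩, ?_⟩
  · refine J.ext_of_comp_faithful (fun a => congrArg U.obj (e.symm_apply_apply a)) ?_
    rw [Functor.assoc, liftOfFullyFaithful_comp, h]
  · rintro W ⟨hSW, hWJ⟩
    refine J.ext_of_comp_faithful (fun b => ?_) (by rw [hWJ, liftOfFullyFaithful_comp])
    calc W.obj b = W.obj (S.obj (e.symm b)) := by rw [hSe]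
      _ = U.obj (e.symm b) := Functor.congr_obj hSW _

section FullImage

variable {A B D : Type*} [Category A] [Category B] [Category D]

/-- The full image of `F`, with its objects (those of `A`) lifted to universe `w`. -/
abbrev FullImage (F : A ⥤ D) : Type _ := InducedCategory D fun a : ULift.{w} A => F.obj a.down

def toFullImage (F : A ⥤ D) : A ⥤ FullImage.{w} F where
  obj a := ⟨a⟩
  map f := InducedCategory.homMk (F.map f)

theorem bijective_obj_of_fill_in_fullImage {S : A ⥤ B} {V : B ⥤ D}
    (hV : Function.Injective V.obj) (W : B ⥤ FullImage.{w} (S ⋙ V))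
    (hSW : S ⋙ W = (S ⋙ V).toFullImage) (hWJ : W ⋙ inducedFunctor _ = V) :
    Function.Bijective S.obj := by
  refine ⟨fun a a' h => ?_, fun b => ⟨(W.obj b).down, hV (Functor.congr_obj hWJ b)⟩⟩
  have ha := Functor.congr_obj hSW a
  rw [Functor.comp_obj, h, ← Functor.comp_obj, Functor.congr_obj hSW a'] at ha
  exact congrArg ULift.down ha.symm

end FullImage

end CategoryTheory.Functor

/-- A functor `S : A ⥤ B` is bijective on objects if and only if it has the diagonal
fill-in property with respect to every fully faithful functor. -/
theorem bijective_on_objects_iff_fill_in {A : Type u₁} {B : Type u₂}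
    [Category.{v₁} A] [Category.{v₂} B] (S : A ⥤ B) :
    Function.Bijective S.obj ↔
      ∀ (C D : Type (max u₁ u₂ v₁ v₂)) (_ : Category.{max u₁ u₂ v₁ v₂} C)
        (_ : Category.{max u₁ u₂ v₁ v₂} D) (J : C ⥤ D), J.Full → J.Faithful →
        ∀ (U : A ⥤ C) (V : B ⥤ D), U ⋙ J = S ⋙ V →
          ∃! W : B ⥤ C, S ⋙ W = U ∧ W ⋙ J = V := by
  refine ⟨fun hS C D _ _ J _ _ U V h => Functor.existsUnique_fill_in_of_bijective hS J h,
    fun hfill => ?_⟩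
  let V : B ⥤ AsSmall.{max u₁ u₂ v₁ v₂} B := AsSmall.up
  let U : A ⥤ Functor.FullImage.{max u₁ u₂ v₁ v₂} (S ⋙ V) := (S ⋙ V).toFullImage
  obtain ⟨W, ⟨hSW, hWJ⟩, -⟩ :=
    hfill _ _ _ _ (inducedFunctor _) inferInstance inferInstance U V rfl
  exact Functor.bijective_obj_of_fill_in_fullImage (fun _ _ h => ULift.up_injective h) W hSW hWJ
end

section
/- Let S : A ⥤ B be bijective on objects and J : C ⥤ D fully faithful. Given functors U : A ⥤ C and V : B ⥤ D together with a natural isomorphism σ : U ⋙ J ≅ S ⋙ V, there exists a unique pair consisting of a functor W : B ⥤ C and a natural isomorphism τ : W ⋙ J ≅ V such that S ⋙ W = U and the left whiskering of S with τ equals σ (as isomorphisms U ⋙ J = S ⋙ W ⋙ J ≅ S ⋙ V). -/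
open CategoryTheory

universe v₁ v₂ v₃ v₄ u₁ u₂ u₃ u₄

section Aux

variable {A : Type u₁} {B : Type u₂} {C : Type u₃} {D : Type u₄}
    [Category.{v₁} A] [Category.{v₂} B] [Category.{v₃} C] [Category.{v₄} D]

lemma app_congr_aux {F G : A ⥤ B} (σ : F ⟶ G) {X Y : A} (h : X = Y) :
    σ.app X = eqToHom (by rw [h]) ≫ σ.app Y ≫ eqToHom (by rw [h]) := by
  subst h; simp

/-- the fill-in functor -/
noncomputable def fillW (S : A ⥤ B) (J : C ⥤ D) [J.Full] [J.Faithful] (U : A ⥤ C) (V : B ⥤ D)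
    (σ : U ⋙ J ≅ S ⋙ V) (g : B → A) (hg2 : ∀ b, S.obj (g b) = b) : B ⥤ C where
  obj b := U.obj (g b)
  map {b b'} f := J.preimage (σ.hom.app (g b) ≫ eqToHom (by rw [Functor.comp_obj, hg2]) ≫ V.map f ≫
    eqToHom (by rw [Functor.comp_obj, hg2]) ≫ σ.inv.app (g b'))
  map_id b := by
    apply J.map_injective
    simp
  map_comp {b b' b''} f f' := by
    apply J.map_injective
    simp

/-- the fill-in natural isomorphism -/
noncomputable def fillτ (S : A ⥤ B) (J : C ⥤ D) [J.Full] [J.Faithful] (U : A ⥤ C) (V : B ⥤ D)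
    (σ : U ⋙ J ≅ S ⋙ V) (g : B → A) (hg2 : ∀ b, S.obj (g b) = b) :
    fillW S J U V σ g hg2 ⋙ J ≅ V :=
  NatIso.ofComponents (fun b => σ.app (g b) ≪≫ eqToIso (by rw [Functor.comp_obj, hg2]))
    (fun {b b'} f => by simp [fillW])

end Aux

/-- Pseudo version of the diagonal fill-in property: given `S` bijective on objects,
`J` fully faithful, and a natural isomorphism `σ : U ⋙ J ≅ S ⋙ V`, there is a unique
pair `(W, τ : W ⋙ J ≅ V)` with `S ⋙ W = U` and with the left whiskering of `S` with `τ`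
equal to `σ` (modulo the identification `U ⋙ J = S ⋙ W ⋙ J`). -/
theorem pseudo_diagonal_fill_in {A : Type u₁} {B : Type u₂} {C : Type u₃} {D : Type u₄}
    [Category.{v₁} A] [Category.{v₂} B] [Category.{v₃} C] [Category.{v₄} D]
    (S : A ⥤ B) (J : C ⥤ D) (hS : Function.Bijective S.obj)
    (hJfull : J.Full) (hJfaithful : J.Faithful)
    (U : A ⥤ C) (V : B ⥤ D) (σ : U ⋙ J ≅ S ⋙ V) :
    ∃! p : Σ W : B ⥤ C, (W ⋙ J ≅ V),
      ∃ h : S ⋙ p.1 = U,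
        Functor.whiskerLeft S p.2.hom = eqToHom (by rw [← Functor.assoc, h]) ≫ σ.hom := by
  haveI := hJfull
  haveI := hJfaithful
  obtain ⟨g, hg1, hg2⟩ : ∃ g : B → A, (∀ a, g (S.obj a) = a) ∧ (∀ b, S.obj (g b) = b) :=
    ⟨(Equiv.ofBijective S.obj hS).symm,
      fun a => (Equiv.ofBijective S.obj hS).symm_apply_apply a,
      fun b => (Equiv.ofBijective S.obj hS).apply_symm_apply b⟩
  have hSW : S ⋙ fillW S J U V σ g hg2 = U := by
    apply CategoryTheory.Functor.ext
    · intro a a' f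
      apply J.map_injective
      simp only [Functor.comp_map, fillW, Functor.map_preimage, Functor.map_comp, eqToHom_map]
      rw [app_congr_aux σ.hom (hg1 a), app_congr_aux σ.inv (hg1 a')]
      have := σ.hom.naturality f
      simp only [Functor.comp_obj, Functor.comp_map] at this ⊢
      simp only [Category.assoc, eqToHom_trans, eqToHom_trans_assoc, eqToHom_refl,
        Category.comp_id, Category.id_comp, Functor.comp_obj]
      rw [← reassoc_of% this]
      simp [eqToHom_map]
      erw [eqToHom_map, eqToHom_map]
    · intro a
      simp [fillW, hg1]
  refine ⟨⟨fillW S J U V σ g hg2, fillτ S J U V σ g hg2⟩, ⟨hSW, ?_⟩, ?_⟩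
  · apply NatTrans.ext
    funext a
    simp only [Functor.whiskerLeft_app, fillτ, NatIso.ofComponents_hom_app, Iso.trans_hom, eqToIso.hom, Iso.app_hom,
      NatTrans.comp_app, eqToHom_app]
    erw [Iso.trans_hom, eqToIso.hom, Iso.app_hom]
    rw [app_congr_aux σ.hom (hg1 a)]
    simp
    erw [Category.assoc, Category.assoc, eqToHom_trans, eqToHom_refl, Category.comp_id]
    rfl
  · rintro ⟨W', τ'⟩ ⟨hW', hτ'⟩
    have hobj : ∀ b, W'.obj b = (fillW S J U V σ g hg2).obj b := by
      intro b
      have := Functor.congr_obj hW' (g b)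
      simp only [Functor.comp_obj, hg2] at this
      simp [fillW, this]
    have happ : ∀ a, τ'.hom.app (S.obj a) =
        eqToHom (by rw [← Functor.comp_obj, ← Functor.assoc, hW']) ≫ σ.hom.app a := by
      intro a
      have := congrArg (fun t => NatTrans.app t a) hτ'
      simpa using this
    have hW : W' = fillW S J U V σ g hg2 := by
      refine CategoryTheory.Functor.ext hobj fun b b' f => ?_
      apply J.map_injective
      have nat : J.map (W'.map f) = τ'.hom.app b ≫ V.map f ≫ τ'.inv.app b' := by
        have := τ'.hom.naturality f
        simp only [Functor.comp_map] at this
        rw [← reassoc_of% this]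
        simp
      rw [nat, app_congr_aux τ'.hom (hg2 b).symm, happ (g b)]
      have hinv : τ'.inv.app b' = eqToHom (by rw [hg2]) ≫ τ'.inv.app (S.obj (g b')) ≫
          eqToHom (by rw [hg2]) := app_congr_aux τ'.inv (hg2 b').symm
      have hinv2 : τ'.inv.app (S.obj (g b')) =
          σ.inv.app (g b') ≫ eqToHom (by rw [← Functor.comp_obj, ← Functor.assoc, hW']) := by
        rw [← cancel_epi (τ'.hom.app (S.obj (g b'))), Iso.hom_inv_id_app, happ (g b')]
        simp
      rw [hinv, hinv2]
      simp only [Functor.map_comp, eqToHom_map, fillW, Functor.map_preimage]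
      simp [eqToHom_map]
      erw [eqToHom_map, eqToHom_map]
    subst hW
    have hτ : τ' = fillτ S J U V σ g hg2 := by
      ext b
      have h1 : τ'.hom.app b = eqToHom (by rw [hg2]) ≫ τ'.hom.app (S.obj (g b)) ≫
          eqToHom (by rw [hg2]) := app_congr_aux τ'.hom (hg2 b).symm
      rw [h1, happ (g b)]
      simp only [fillτ, NatIso.ofComponents_hom_app]
      erw [Iso.trans_hom, eqToIso.hom, Iso.app_hom]
      simp [fillτ]
      erw [eqToHom_refl, Category.id_comp]
      rfl
    subst hτ
    rfl
end

section
/- Let E be a truncated simplicial category, p : E₀ ⥤ B a functor, and λ : d₁ ⋙ p ⟶ d₀ ⋙ p a natural transformation whose component at i₀(c) is the identity of p(c) for every object c of E₀ and which satisfies, for every object e of E₂, λ at d₁(e) equals the composite of λ at d₂(e) followed by λ at d₀(e). If, for every category X, the comparison functor K_X : (B ⥤ X) ⥤ Desc(E, X) — sending a functor h to (p ⋙ h, the whiskering of λ with h) and a natural transformation α to the left whiskering of p with α — is an isomorphism of categories, then p is bijective on objects. -/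
open CategoryTheory

universe w' w v u

/-- A truncated simplicial category: categories `E₀`, `E₁`, `E₂` with face functors
`d₀ d₁ : E₁ ⥤ E₀`, a degeneracy `i₀ : E₀ ⥤ E₁` and faces `e₀ e₁ e₂ : E₂ ⥤ E₁`
satisfying the simplicial identities. -/
structure TruncSimpCat where
  E₀ : Type u
  E₁ : Type u
  E₂ : Type u
  [cat₀ : Category.{v} E₀]
  [cat₁ : Category.{v} E₁]
  [cat₂ : Category.{v} E₂]
  d₀ : E₁ ⥤ E₀
  d₁ : E₁ ⥤ E₀
  i₀ : E₀ ⥤ E₁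
  e₀ : E₂ ⥤ E₁
  e₁ : E₂ ⥤ E₁
  e₂ : E₂ ⥤ E₁
  w₀ : i₀ ⋙ d₀ = 𝟭 E₀
  w₁ : i₀ ⋙ d₁ = 𝟭 E₀
  w₂ : e₁ ⋙ d₀ = e₀ ⋙ d₀
  w₃ : e₂ ⋙ d₀ = e₀ ⋙ d₁
  w₄ : e₂ ⋙ d₁ = e₁ ⋙ d₁

attribute [instance] TruncSimpCat.cat₀ TruncSimpCat.cat₁ TruncSimpCat.cat₂

namespace TruncSimpCat

variable (E : TruncSimpCat.{v, u})

section Eqs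

variable {X : Type w} [Category.{w'} X] (F : E.E₀ ⥤ X)

theorem unit_eq (c : E.E₀) :
    (E.d₁ ⋙ F).obj (E.i₀.obj c) = (E.d₀ ⋙ F).obj (E.i₀.obj c) :=
  congrArg F.obj ((Functor.congr_obj E.w₁ c).trans (Functor.congr_obj E.w₀ c).symm)

theorem coc_eq₁ (e : E.E₂) :
    (E.d₁ ⋙ F).obj (E.e₁.obj e) = (E.d₁ ⋙ F).obj (E.e₂.obj e) :=
  congrArg F.obj (Functor.congr_obj E.w₄ e).symm

theorem coc_eq₂ (e : E.E₂) :
    (E.d₀ ⋙ F).obj (E.e₂.obj e) = (E.d₁ ⋙ F).obj (E.e₀.obj e) :=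
  congrArg F.obj (Functor.congr_obj E.w₃ e)

theorem coc_eq₃ (e : E.E₂) :
    (E.d₀ ⋙ F).obj (E.e₀.obj e) = (E.d₀ ⋙ F).obj (E.e₁.obj e) :=
  congrArg F.obj (Functor.congr_obj E.w₂ e).symm

end Eqs

/-- An object of the descent category `Desc(E, X)`: a functor `F : E₀ ⥤ X` together
with descent data `φ : d₁ ⋙ F ⟶ d₀ ⋙ F` satisfying the unit and cocycle conditions. -/
structure DescObj (X : Type w) [Category.{w'} X] where
  F : E.E₀ ⥤ X
  φ : E.d₁ ⋙ F ⟶ E.d₀ ⋙ F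
  unit : ∀ c : E.E₀, φ.app (E.i₀.obj c) = eqToHom (E.unit_eq F c)
  cocycle : ∀ e : E.E₂,
    φ.app (E.e₁.obj e) =
      eqToHom (E.coc_eq₁ F e) ≫ φ.app (E.e₂.obj e) ≫ eqToHom (E.coc_eq₂ F e) ≫
        φ.app (E.e₀.obj e) ≫ eqToHom (E.coc_eq₃ F e)

/-- A morphism of the descent category `Desc(E, X)`. -/
@[ext]
structure DescHom {X : Type w} [Category.{w'} X] (P Q : E.DescObj X) where
  u : P.F ⟶ Q.F
  w : ∀ x : E.E₁, P.φ.app x ≫ u.app (E.d₀.obj x) = u.app (E.d₁.obj x) ≫ Q.φ.app x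

instance descCategory (X : Type w) [Category.{w'} X] : Category (E.DescObj X) where
  Hom := DescHom E
  id P := ⟨𝟙 P.F, fun x => by simp⟩
  comp f g := ⟨f.u ≫ g.u, fun x => by
    simp only [NatTrans.comp_app, ← Category.assoc, f.w x]
    simp only [Category.assoc, g.w x]⟩
  id_comp f := by apply DescHom.ext; simp only []; exact Category.id_comp f.u
  comp_id f := by apply DescHom.ext; simp only []; exact Category.comp_id f.u
  assoc f g h := by apply DescHom.ext; simp only []; exact Category.assoc f.u g.u h.u

variable {B : Type u} [Category.{v} B]

/-- The comparison functor `(B ⥤ X) ⥤ Desc(E, X)` induced by a functor `p : E₀ ⥤ B`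
equipped with a transformation `λ : d₁ ⋙ p ⟶ d₀ ⋙ p` satisfying the unit and cocycle
conditions; it sends `h` to `(p ⋙ h, whiskering of λ with h)` and `α` to the left
whiskering of `p` with `α`. -/
def comparison (p : E.E₀ ⥤ B) (lam : E.d₁ ⋙ p ⟶ E.d₀ ⋙ p)
    (hunit : ∀ c : E.E₀, lam.app (E.i₀.obj c) = eqToHom (E.unit_eq p c))
    (hcocycle : ∀ e : E.E₂,
      lam.app (E.e₁.obj e) =
        eqToHom (E.coc_eq₁ p e) ≫ lam.app (E.e₂.obj e) ≫ eqToHom (E.coc_eq₂ p e) ≫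
          lam.app (E.e₀.obj e) ≫ eqToHom (E.coc_eq₃ p e))
    (X : Type w) [Category.{w'} X] :
    (B ⥤ X) ⥤ E.DescObj X where
  obj h :=
    { F := p ⋙ h
      φ := Functor.whiskerRight lam h
      unit := fun c => by simp [hunit c, eqToHom_map]
      cocycle := fun e => by simp [hcocycle e, eqToHom_map] }
  map α :=
    { u := Functor.whiskerLeft p α
      w := fun x => by simp }
  map_id h := by
    apply DescHom.ext
    show Functor.whiskerLeft p (𝟙 h) = 𝟙 (p ⋙ h)
    ext a; simp
  map_comp α β := by
    apply DescHom.ext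
    show Functor.whiskerLeft p (α ≫ β) = Functor.whiskerLeft p α ≫ Functor.whiskerLeft p β
    ext a; simp

section Aux

universe x₁ x₂ x₃

/-- The codiscrete category on a type. -/
def Codisc (S : Type x₁) : Type x₁ := S

instance Codisc.cat (S : Type x₁) : Category.{x₂} (Codisc S) where
  Hom _ _ := PUnit
  id _ := ⟨⟩
  comp _ _ := ⟨⟩

instance Codisc.subsing (S : Type x₁) (X Y : Codisc S) : Subsingleton (X ⟶ Y) :=
  ⟨fun ⟨⟩ ⟨⟩ => rfl⟩

/-- Any function into a codiscrete category extends to a functor. -/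
def toCodisc {C : Type x₃} [Category C] {S : Type x₁} (f : C → S) : C ⥤ Codisc S where
  obj := f
  map _ := ⟨⟩

theorem codisc_functor_ext {C : Type x₃} [Category C] {S : Type x₁}
    {F G : C ⥤ Codisc S} (h : ∀ a, F.obj a = G.obj a) : F = G :=
  CategoryTheory.Functor.ext h (fun _ _ _ => Subsingleton.elim _ _)

theorem descObj_codisc_ext (E : TruncSimpCat.{v, u}) {S : Type x₁}
    {D D' : E.DescObj (Codisc S)} (h : ∀ a, D.F.obj a = D'.F.obj a) : D = D' := by
  obtain ⟨F, φ, u1, c1⟩ := D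
  obtain ⟨F', φ', u2, c2⟩ := D'
  obtain rfl : F = F' := codisc_functor_ext h
  obtain rfl : φ = φ' := by ext a; exact Subsingleton.elim _ _
  rfl

/-- A descent object in a codiscrete category from an arbitrary function. -/
def descOfFun (E : TruncSimpCat.{v, u}) {S : Type x₁} (f : E.E₀ → S) :
    E.DescObj (Codisc S) where
  F := toCodisc f
  φ := { app := fun _ => ⟨⟩, naturality := fun _ _ _ => Subsingleton.elim _ _ }
  unit _ := Subsingleton.elim _ _
  cocycle _ := Subsingleton.elim _ _

theorem precomp_bijective (E : TruncSimpCat.{v, u})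
    {B : Type u} [Category.{v} B]
    (p : E.E₀ ⥤ B) (lam : E.d₁ ⋙ p ⟶ E.d₀ ⋙ p)
    (hunit : ∀ c : E.E₀, lam.app (E.i₀.obj c) = eqToHom (E.unit_eq p c))
    (hcocycle : ∀ e : E.E₂,
      lam.app (E.e₁.obj e) =
        eqToHom (E.coc_eq₁ p e) ≫ lam.app (E.e₂.obj e) ≫ eqToHom (E.coc_eq₂ p e) ≫
          lam.app (E.e₀.obj e) ≫ eqToHom (E.coc_eq₃ p e))
    (hiso : ∀ (X : Type (max u v)) (_ : Category.{max u v} X),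
      ∃ Ψ : E.DescObj X ⥤ (B ⥤ X),
        E.comparison p lam hunit hcocycle X ⋙ Ψ = 𝟭 (B ⥤ X) ∧
          Ψ ⋙ E.comparison p lam hunit hcocycle X = 𝟭 (E.DescObj X))
    (S : Type (max u v)) :
    Function.Bijective (fun (g : B → S) => g ∘ p.obj) := by
  obtain ⟨Ψ, h1, h2⟩ := hiso (Codisc S) inferInstance
  constructor
  · intro g g' hgg
    have e1 : (E.comparison p lam hunit hcocycle (Codisc S)).obj (toCodisc g) =
        (E.comparison p lam hunit hcocycle (Codisc S)).obj (toCodisc g') :=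
      descObj_codisc_ext E (fun a => congrFun hgg a)
    have i1 : toCodisc g = toCodisc g' := by
      have a1 := Functor.congr_obj h1 (toCodisc g)
      have a2 := Functor.congr_obj h1 (toCodisc g')
      simp only [Functor.comp_obj, Functor.id_obj] at a1 a2
      rw [← a1, ← a2, e1]
    funext b
    exact congrArg (fun F : B ⥤ Codisc S => F.obj b) i1
  · intro f
    refine ⟨(Ψ.obj (descOfFun E f)).obj, ?_⟩
    have a := Functor.congr_obj h2 (descOfFun E f)
    simp only [Functor.comp_obj, Functor.id_obj] at a
    funext a₀
    exact congrArg (fun D => D.F.obj a₀) a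

end Aux

/-- If a functor `p : E₀ ⥤ B` with descent data `λ` is such that for every category `X`
the comparison functor `(B ⥤ X) ⥤ Desc(E, X)` is an isomorphism of categories (i.e. `p`
exhibits `B` as the codescent category of `E`), then `p` is bijective on objects. -/
theorem bijective_on_objects_of_codescent (E : TruncSimpCat.{v, u})
    {B : Type u} [Category.{v} B]
    (p : E.E₀ ⥤ B) (lam : E.d₁ ⋙ p ⟶ E.d₀ ⋙ p)
    (hunit : ∀ c : E.E₀, lam.app (E.i₀.obj c) = eqToHom (E.unit_eq p c))
    (hcocycle : ∀ e : E.E₂,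
      lam.app (E.e₁.obj e) =
        eqToHom (E.coc_eq₁ p e) ≫ lam.app (E.e₂.obj e) ≫ eqToHom (E.coc_eq₂ p e) ≫
          lam.app (E.e₀.obj e) ≫ eqToHom (E.coc_eq₃ p e))
    (hiso : ∀ (X : Type (max u v)) (_ : Category.{max u v} X),
      ∃ Ψ : E.DescObj X ⥤ (B ⥤ X),
        E.comparison p lam hunit hcocycle X ⋙ Ψ = 𝟭 (B ⥤ X) ∧
          Ψ ⋙ E.comparison p lam hunit hcocycle X = 𝟭 (E.DescObj X)) :
    Function.Bijective p.obj := by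
  classical
  have key := precomp_bijective E p lam hunit hcocycle hiso
  constructor
  · intro a a' h
    obtain ⟨g, hg⟩ := (key (ULift.{v} E.E₀)).2 (fun a => ULift.up a)
    have h1 := congrFun hg a
    have h2 := congrFun hg a'
    simp only [Function.comp_apply] at h1 h2
    have : (ULift.up a : ULift.{v} E.E₀) = ULift.up a' := by
      rw [← h1, ← h2, h]
    exact congrArg ULift.down this
  · intro b
    by_contra hb
    set g : B → ULift.{max u v} Bool :=
      fun b' => ULift.up (decide (∃ a, p.obj a = b')) with hgdef
    have hcomp : (fun g : B → ULift.{max u v} Bool => g ∘ p.obj) g =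
        (fun g : B → ULift.{max u v} Bool => g ∘ p.obj) (fun _ => ULift.up true) := by
      funext a
      simp only [Function.comp_apply, hgdef]
      congr 1
      exact decide_eq_true ⟨a, rfl⟩
    have := congrFun ((key (ULift.{max u v} Bool)).1 hcomp) b
    simp only [hgdef] at this
    have hfalse : decide (∃ a, p.obj a = b) = false := decide_eq_false hb
    rw [hfalse] at this
    exact Bool.noConfusion (congrArg ULift.down this)

end TruncSimpCat
end

section
/- Let s : A ⥤ B be a functor that is bijective on objects, and let K = Comma s s be the comma category whose objects are triples (a₁, a₀, β : s(a₁) ⟶ s(a₀)), with projections d₁, d₀ : K ⥤ A sending such a triple to a₁ and a₀ respectively. Then for every category D, every functor g : A ⥤ D, and every natural transformation γ : d₁ ⋙ g ⟶ d₀ ⋙ g such that (i) the component of γ at (a, a, 𝟙_{s(a)}) is the identity of g(a) for every object a of A, and (ii) for all objects (a₂, a₁, β') and (a₁, a₀, β) of K the component of γ at (a₂, a₀, β' ≫ β) equals the component of γ at (a₂, a₁, β') followed by the component of γ at (a₁, a₀, β), there exists a unique functor h : B ⥤ D with s ⋙ h = g and with h(β) equal to the component of γ at (a₁, a₀, β)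 for every object (a₁, a₀, β) of K. (That is, a bijective-on-objects functor exhibits its codomain as the codescent category of its higher kernel.) -/
/-!
A bijective-on-objects `s` factors through the category induced on `A` from `B` along `s.obj`,
whose morphisms `a₁ ⟶ a₀` are the morphisms `s a₁ ⟶ s a₀`, and the forgetful functor from it
to `B` is then an isomorphism of categories. On the induced category the components of `γ`
already form a functor (this is exactly what the unit and cocycle conditions say), and the
functors `h` of the theorem are precisely its strict transports to `B`.
-/

open CategoryTheory

universe v₁ v₂ v₃ u₁ u₂ u₃

namespace CategoryTheory

variable {A : Type u₁} {B : Type u₂} {D : Type u₃}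
  [Category.{v₁} A] [Category.{v₂} B] [Category.{v₃} D]

lemma Functor.existsUnique_comp_eq {C : Type*} [Category* C] (F : C ⥤ B) [F.IsIso]
    (k : C ⥤ D) : ∃! h : B ⥤ D, F ⋙ h = k := by
  have unit : F ⋙ F.strictInv = 𝟭 C := F.asIsomorphism.unit_eq.symm
  have counit : F.strictInv ⋙ F = 𝟭 B := F.asIsomorphism.counit_eq
  refine ⟨F.strictInv ⋙ k, ?_, fun h hh => ?_⟩
  · dsimp only
    rw [← Functor.assoc, unit, Functor.id_comp]
  · rw [← hh, ← Functor.assoc, counit, Functor.id_comp]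

def Functor.toInducedCategory (s : A ⥤ B) : A ⥤ InducedCategory B s.obj where
  obj a := a
  map f := InducedCategory.homMk (s.map f)

variable {s : A ⥤ B} {g : A ⥤ D} (γ : Comma.fst s s ⋙ g ⟶ Comma.snd s s ⋙ g)
  (hid : ∀ a : A, γ.app ⟨a, a, 𝟙 (s.obj a)⟩ = 𝟙 (g.obj a))
  (hcomp : ∀ (a₂ a₁ a₀ : A) (β' : s.obj a₂ ⟶ s.obj a₁) (β : s.obj a₁ ⟶ s.obj a₀),
      γ.app ⟨a₂, a₀, β' ≫ β⟩ = γ.app ⟨a₂, a₁, β'⟩ ≫ γ.app ⟨a₁, a₀, β⟩)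

include hid in
lemma app_mk_map_eq_map {a a' : A} (f : a ⟶ a') : γ.app ⟨a, a', s.map f⟩ = g.map f := by
  have h := γ.naturality (X := ⟨a, a, 𝟙 (s.obj a)⟩) (Y := ⟨a, a', s.map f⟩) ⟨𝟙 a, f, by simp⟩
  change g.map (𝟙 a) ≫ _ = γ.app ⟨a, a, 𝟙 (s.obj a)⟩ ≫ g.map f at h
  rw [g.map_id, hid] at h
  exact (Category.id_comp _).symm.trans (h.trans (Category.id_comp _))

def codescentFunctor : InducedCategory B s.obj ⥤ D where
  obj := g.obj
  map β := γ.app ⟨_, _, β.hom⟩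
  map_id a := hid a
  map_comp β' β := hcomp _ _ _ β'.hom β.hom

lemma toInducedCategory_comp_codescentFunctor :
    s.toInducedCategory ⋙ codescentFunctor γ hid hcomp = g :=
  Functor.hext (fun _ => rfl) fun _ _ f => heq_of_eq (app_mk_map_eq_map γ hid f)

lemma inducedFunctor_comp_eq_codescentFunctor_iff (h : B ⥤ D) :
    inducedFunctor s.obj ⋙ h = codescentFunctor γ hid hcomp ↔
      ∃ e : s ⋙ h = g, ∀ (a₁ a₀ : A) (β : s.obj a₁ ⟶ s.obj a₀),
        h.map β = eqToHom (Functor.congr_obj e a₁) ≫ γ.app ⟨a₁, a₀, β⟩ ≫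
          eqToHom (Functor.congr_obj e a₀).symm := by
  constructor
  · intro hh
    have e : s ⋙ h = g := by
      rw [← toInducedCategory_comp_codescentFunctor γ hid hcomp, ← hh]
      rfl
    exact ⟨e, fun a₁ a₀ β => Functor.congr_hom hh (InducedCategory.homMk β)⟩
  · rintro ⟨e, he⟩
    exact Functor.ext (fun a => Functor.congr_obj e a) fun a₁ a₀ β => he a₁ a₀ β.hom

end CategoryTheory

/-- A bijective-on-objects functor `s : A ⥤ B` exhibits `B` as the codescent category of
its higher kernel: for every category `D`, every `g : A ⥤ D`, and every
`γ : d₁ ⋙ g ⟶ d₀ ⋙ g` (where `d₁, d₀ : Comma s s ⥤ A` are the projections) satisfying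
the unit and cocycle conditions, there is a unique functor `h : B ⥤ D` with `s ⋙ h = g`
whose action on morphisms is given by the components of `γ`. -/
theorem codescent_of_bijective_on_objects {A : Type u₁} {B : Type u₂}
    [Category.{v₁} A] [Category.{v₂} B] (s : A ⥤ B)
    (hs : Function.Bijective s.obj)
    {D : Type u₃} [Category.{v₃} D] (g : A ⥤ D)
    (γ : Comma.fst s s ⋙ g ⟶ Comma.snd s s ⋙ g)
    (hid : ∀ a : A, γ.app ⟨a, a, 𝟙 (s.obj a)⟩ = 𝟙 (g.obj a))
    (hcomp : ∀ (a₂ a₁ a₀ : A) (β' : s.obj a₂ ⟶ s.obj a₁) (β : s.obj a₁ ⟶ s.obj a₀),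
      γ.app ⟨a₂, a₀, β' ≫ β⟩ = γ.app ⟨a₂, a₁, β'⟩ ≫ γ.app ⟨a₁, a₀, β⟩) :
    ∃! h : B ⥤ D, ∃ e : s ⋙ h = g,
      ∀ (a₁ a₀ : A) (β : s.obj a₁ ⟶ s.obj a₀),
        h.map β =
          eqToHom (Functor.congr_obj e a₁) ≫ γ.app ⟨a₁, a₀, β⟩ ≫
            eqToHom (Functor.congr_obj e a₀).symm := by
  have : (inducedFunctor s.obj).IsIso := { bijective_obj := hs }
  simpa only [inducedFunctor_comp_eq_codescentFunctor_iff γ hid hcomp] using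
    Functor.existsUnique_comp_eq (inducedFunctor s.obj) (codescentFunctor γ hid hcomp)
end

section
/- Let C be a category with pullbacks and f : W ⟶ U a morphism. The base-change functor Over.pullback f : Over U ⥤ Over W admits a right adjoint if and only if the endofunctor of the slice category Over U given by binary product with the object (f : W ⟶ U) of Over U admits a right adjoint (so that f can serve as a power for cartesian exponentiation in Over U). -/
/-!
The iterated slice equivalence `Over (Over.mk f) ≌ Over W` identifies `Over.pullback f` with
`Over.star (Over.mk f)`, so it suffices to show that, for an object `X` of a category with
binary products, a terminal object and pullbacks, `Over.star X` is a left adjoint iff `X ⨯ -` is.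
Since `X ⨯ - = Over.star X ⋙ Over.forget X` and `Over.forget X ⊣ Over.star X`, one direction is
composition of adjunctions. Conversely, if `X ⨯ - ⊣ E`, the right adjoint of `Over.star X` sends
`h : Y ⟶ X` to the object of sections of `h`: the pullback of `E.map h` along the transpose
`⊤_ ⟶ E.obj X` of the first projection.
-/

open CategoryTheory CategoryTheory.Limits

universe v u

namespace CategoryTheory.Over

section

variable {D : Type*} [Category D] [HasBinaryProducts D] [HasTerminal D]
  {X : D} {E : D ⥤ D} (adj : prod.functor.obj X ⊣ E)

noncomputable def curriedFst : ⊤_ D ⟶ E.obj X :=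
  adj.homEquiv _ _ (prod.fst : X ⨯ ⊤_ D ⟶ X)

lemma terminal_from_comp_curriedFst (A : D) :
    terminal.from A ≫ curriedFst adj = adj.homEquiv A X (prod.fst : X ⨯ A ⟶ X) :=
  (adj.homEquiv_naturality_left (terminal.from A) _).symm.trans <|
    congrArg _ ((prod.map_fst _ _).trans (Category.comp_id _))

lemma homEquiv_comp_map_eq_iff {A : D} {h : Over X} (k : X ⨯ A ⟶ h.left) :
    adj.homEquiv A h.left k ≫ E.map h.hom = terminal.from A ≫ curriedFst adj ↔
      k ≫ h.hom = prod.fst := by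
  rw [terminal_from_comp_curriedFst]
  exact (Eq.congr_left (adj.homEquiv_naturality_right k h.hom)).symm.trans
    (adj.homEquiv A X).apply_eq_iff_eq

variable [HasPullbacks D]

noncomputable def starHomEquiv (A : D) (h : Over X) :
    ((star X).obj A ⟶ h) ≃ (A ⟶ Limits.pullback (E.map h.hom) (curriedFst adj)) where
  toFun k := pullback.lift (adj.homEquiv A h.left k.left) (terminal.from A)
    ((homEquiv_comp_map_eq_iff adj _).2 ((Over.w k).trans (prod.lift_fst _ _)))
  invFun a := Over.homMk ((adj.homEquiv A h.left).symm (a ≫ pullback.fst _ _)) <| by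
    refine ((homEquiv_comp_map_eq_iff adj _).1 ?_).trans (prod.lift_fst _ _).symm
    rw [Equiv.apply_symm_apply, Category.assoc, pullback.condition, ← Category.assoc,
      Subsingleton.elim (a ≫ pullback.snd _ _)]
  left_inv k := Over.OverMorphism.ext <|
    (congrArg _ (pullback.lift_fst _ _ _)).trans (Equiv.symm_apply_apply _ _)
  right_inv a := pullback.hom_ext
    ((pullback.lift_fst _ _ _).trans (Equiv.apply_symm_apply _ _)) (Subsingleton.elim _ _)

lemma starHomEquiv_apply_fst {A : D} {h : Over X} (k : (star X).obj A ⟶ h) :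
    starHomEquiv adj A h k ≫ pullback.fst _ _ = adj.homEquiv A h.left k.left :=
  pullback.lift_fst _ _ _

include adj in
lemma star_isLeftAdjoint_of_adjunction : (star X).IsLeftAdjoint := by
  refine (Adjunction.adjunctionOfEquivRight (starHomEquiv adj) fun A' A h g k => ?_).isLeftAdjoint
  refine pullback.hom_ext ?_ (Subsingleton.elim _ _)
  rw [Category.assoc, starHomEquiv_apply_fst, starHomEquiv_apply_fst]
  exact adj.homEquiv_naturality_left g k.left

theorem star_isLeftAdjoint_iff (X : D) :
    (star X).IsLeftAdjoint ↔ (prod.functor.obj X).IsLeftAdjoint :=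
  ⟨fun _ => Functor.isLeftAdjoint_of_iso (Iso.refl (star X ⋙ forget X)),
    fun _ => star_isLeftAdjoint_of_adjunction (Adjunction.ofIsLeftAdjoint _)⟩

end

noncomputable def pullbackIsoStarCompIteratedSliceForward {C : Type*} [Category C] {W U : C}
    (f : W ⟶ U) [HasPullbacksAlong f] [HasBinaryProducts (Over U)] :
    Over.pullback f ≅ star (Over.mk f) ⋙ (Over.mk f).iteratedSliceForward :=
  (mapPullbackAdj f).rightAdjointUniq
    (((Over.mk f).iteratedSliceEquiv.symm.toAdjunction.comp (forgetAdjStar _)).ofNatIsoLeft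
      (eqToIso (iteratedSliceBackward_forget _)))

end CategoryTheory.Over

/-- A morphism `f : W ⟶ U` is powerful (i.e. the base-change functor
`Over.pullback f : Over U ⥤ Over W` admits a right adjoint) if and only if the
endofunctor of `Over U` given by binary product with the object `f` of `Over U`
admits a right adjoint (so that `f` can serve as a power for cartesian exponentiation
in `Over U`). -/
theorem powerful_iff_prod_functor_isLeftAdjoint {C : Type u} [Category.{v} C]
    [HasPullbacks C] {W U : C} (f : W ⟶ U) :
    haveI : HasBinaryProducts (Over U) :=
      Over.ConstructProducts.over_binaryProduct_of_pullback
    ((Over.pullback f).IsLeftAdjoint ↔ (prod.functor.obj (Over.mk f)).IsLeftAdjoint) := by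
  have : HasBinaryProducts (Over U) := Over.ConstructProducts.over_binaryProduct_of_pullback
  have : (Over.mk f).iteratedSliceForward.IsEquivalence :=
    (Over.mk f).iteratedSliceEquiv.isEquivalence_functor
  have e := Over.pullbackIsoStarCompIteratedSliceForward f
  calc (Over.pullback f).IsLeftAdjoint
      ↔ (Over.star (Over.mk f) ⋙ (Over.mk f).iteratedSliceForward).IsLeftAdjoint :=
        ⟨fun _ => Functor.isLeftAdjoint_of_iso e, fun _ => Functor.isLeftAdjoint_of_iso e.symm⟩
    _ ↔ (Over.star (Over.mk f)).IsLeftAdjoint := Functor.isLeftAdjoint_comp_iff_left _ _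
    _ ↔ (prod.functor.obj (Over.mk f)).IsLeftAdjoint := Over.star_isLeftAdjoint_iff _
end
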